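/- Let X be a finite equilateral metric space with n = |X| points, all pairwise distances equal to 2C > 0. Then ae(X) = 2 − 2/n. -/

import Mathlib

/-!
Upper bound: inside `Y`, the points of `X` are `2C`-separated, so tent functions of radius `C`
around them have disjoint supports. With `b` the mean of `f`, the map `b + ∑ₓ tentₓ • (f x - b)`
extends `f` with Lipschitz constant `maxₓ ‖f x - b‖ / C`, and `‖f x - b‖ ≤ (1 - 1/n) · 2C · Lip f`.

Lower bound: the points `C • eₓ` of `ℓ¹(X)` form a copy of `X`, all at distance `C` from `0`, and
`x ↦ C • eₓ - (C/n) • 𝟙` maps `X` isometrically into the hyperplane `H = {∑ w = 0}`. An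
extension `g : ℓ¹(X) → H` puts `g 0` within `K C` of every vertex; but since each coordinate of a
vector of `H` is at most half its norm, the average distance from any point of `H` to the
vertices is at least `(2 - 2/n) C`.
-/

noncomputable section

/-- The Lipschitz constant of a map (infimum of admissible constants). -/
def lipConst {α β : Type*} [PseudoEMetricSpace α] [PseudoEMetricSpace β] (f : α → β) : NNReal :=
  sInf {K : NNReal | LipschitzWith K f}

/-- The absolute extendability constant `ae(X)`: the least `K ≥ 0` such that for every
metric space `Y` containing `X` (isometrically), every Banach space `E`, and every
Lipschitz map `f : X → E`, the map `f` admits a `K·Lip(f)`-Lipschitz extension to `Y`. -/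
def aeConst (X : Type) [MetricSpace X] : ℝ :=
  sInf {K : ℝ | 0 ≤ K ∧ ∀ (Y : Type) [MetricSpace Y] (ι : X → Y), Isometry ι →
    ∀ (E : Type) [NormedAddCommGroup E] [NormedSpace ℝ E] [CompleteSpace E] (f : X → E),
      (∃ L, LipschitzWith L f) →
      ∃ g : Y → E, (∀ x : X, g (ι x) = f x) ∧ LipschitzWith (K.toNNReal * lipConst f) g}

/-- The non-linear extension modulus `ν(X,Y)` for a subset `X ⊆ Y`: the least `K ≥ 0`
such that every Lipschitz map from `X` into any Banach space admits a `K·Lip(f)`-Lipschitz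
extension to `Y`. -/
def nuMod (Y : Type) [MetricSpace Y] (X : Set Y) : ℝ :=
  sInf {K : ℝ | 0 ≤ K ∧ ∀ (E : Type) [NormedAddCommGroup E] [NormedSpace ℝ E]
    [CompleteSpace E] (f : ↥X → E), (∃ L, LipschitzWith L f) →
    ∃ g : Y → E, (∀ x : ↥X, g ↑x = f x) ∧ LipschitzWith (K.toNNReal * lipConst f) g}

end

open Finset

theorem LipschitzWith.lipConst_le {α β : Type*} [PseudoEMetricSpace α] [PseudoEMetricSpace β]
    {f : α → β} {K : NNReal} (hf : LipschitzWith K f) : lipConst f ≤ K :=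
  csInf_le (OrderBot.bddBelow _) hf

theorem lipschitzWith_lipConst {α β : Type*} [PseudoMetricSpace α] [PseudoMetricSpace β]
    {f : α → β} (hf : ∃ L, LipschitzWith L f) : LipschitzWith (lipConst f) f := by
  obtain ⟨L, hL⟩ := hf
  refine LipschitzWith.of_dist_le_mul fun x y => ?_
  rcases (dist_nonneg (x := x) (y := y)).eq_or_lt with hxy | hxy
  · simpa [← hxy] using hL.dist_le_mul x y
  · rw [← div_le_iff₀ hxy, ← Real.toNNReal_le_iff_le_coe]
    exact le_csInf ⟨L, hL⟩ fun K hK => by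
      rw [Real.toNNReal_le_iff_le_coe, div_le_iff₀ hxy]
      exact hK.dist_le_mul x y

section Tent

variable {Y : Type*} [PseudoMetricSpace Y] {C : ℝ}

noncomputable def tent (C : ℝ) (p y : Y) : ℝ := max (1 - dist y p / C) 0

theorem tent_nonneg (p y : Y) : 0 ≤ tent C p y := le_max_right _ _

theorem tent_self (p : Y) : tent C p p = 1 := by simp [tent]

theorem tent_eq_zero (hC : 0 < C) {p y : Y} (h : C ≤ dist y p) : tent C p y = 0 :=
  max_eq_right <| sub_nonpos.2 <| (one_le_div hC).2 h

theorem tent_of_dist_lt (hC : 0 < C) {p y : Y} (h : dist y p < C) :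
    tent C p y = 1 - dist y p / C :=
  max_eq_left <| sub_nonneg.2 ((div_lt_one hC).2 h).le

theorem abs_tent_sub_tent_le (hC : 0 < C) (p y y' : Y) :
    |tent C p y - tent C p y'| ≤ dist y y' / C := by
  calc |tent C p y - tent C p y'| ≤ |(1 - dist y p / C) - (1 - dist y' p / C)| :=
        abs_max_sub_max_le_abs _ _ _
    _ = |dist y' p - dist y p| / C := by rw [← abs_of_pos hC, ← abs_div, abs_of_pos hC]; ring_nf
    _ ≤ dist y y' / C := by
        gcongr
        rw [dist_comm y y']
        exact abs_dist_sub_le _ _ _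

-- Where both tents are positive this is `2C ≤ d(p, y) + d(y, y') + d(y', p')`.
theorem tent_add_tent_le (hC : 0 < C) {p p' y y' : Y} (hpp' : 2 * C ≤ dist p p')
    (hp'y : tent C p' y = 0) (hpy' : tent C p y' = 0) :
    tent C p y + tent C p' y' ≤ dist y y' / C := by
  rcases le_or_gt C (dist y p) with hy | hy
  · rw [tent_eq_zero hC hy, zero_add, dist_comm, ← sub_zero (tent C p' y'), ← hp'y]
    exact (le_abs_self _).trans (abs_tent_sub_tent_le hC p' y' y)
  rcases le_or_gt C (dist y' p') with hy' | hy'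
  · rw [tent_eq_zero hC hy', add_zero, ← sub_zero (tent C p y), ← hpy']
    exact (le_abs_self _).trans (abs_tent_sub_tent_le hC p y y')
  rw [tent_of_dist_lt hC hy, tent_of_dist_lt hC hy', le_div_iff₀ hC]
  have := dist_triangle4 p y y' p'
  rw [dist_comm p y] at this
  field_simp
  linarith

end Tent

section SeparatedExtension

variable {ι Y E : Type*} [PseudoMetricSpace Y] [NormedAddCommGroup E] [NormedSpace ℝ E]
  {C : ℝ} {p : ι → Y}

theorem exists_forall_ne_tent_eq_zero [Nonempty ι] (hC : 0 < C)
    (hp : Pairwise fun i j => 2 * C ≤ dist (p i) (p j)) (y : Y) :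
    ∃ i, ∀ j ≠ i, tent C (p j) y = 0 := by
  by_cases hy : ∃ i, dist y (p i) < C
  · obtain ⟨i, hi⟩ := hy
    refine ⟨i, fun j hji => tent_eq_zero hC ?_⟩
    linarith [hp hji.symm, dist_triangle_left (p i) (p j) y]
  · push Not at hy
    exact ⟨Classical.arbitrary ι, fun j _ => tent_eq_zero hC (hy j)⟩

variable [Fintype ι]

theorem sum_abs_tent_sub_tent_le [Nonempty ι] (hC : 0 < C)
    (hp : Pairwise fun i j => 2 * C ≤ dist (p i) (p j)) (y y' : Y) :
    ∑ i, |tent C (p i) y - tent C (p i) y'| ≤ dist y y' / C := by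
  obtain ⟨i, hi⟩ := exists_forall_ne_tent_eq_zero hC hp y
  obtain ⟨j, hj⟩ := exists_forall_ne_tent_eq_zero hC hp y'
  rcases eq_or_ne i j with rfl | hij
  · rw [Finset.sum_eq_single i (fun k _ hk => by simp [hi k hk, hj k hk]) (by simp)]
    exact abs_tent_sub_tent_le hC _ y y'
  · rw [Finset.sum_eq_add_of_mem i j (mem_univ i) (mem_univ j) hij
      (fun k _ hk => by simp [hi k hk.1, hj k hk.2]), hj i hij, hi j hij.symm, sub_zero,
      zero_sub, abs_neg, abs_of_nonneg (tent_nonneg _ _), abs_of_nonneg (tent_nonneg _ _)]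
    exact tent_add_tent_le hC (hp hij) (hi j hij.symm) (hj i hij)

noncomputable def tentSum (C : ℝ) (p : ι → Y) (v : ι → E) (y : Y) : E :=
  ∑ i, tent C (p i) y • v i

theorem tentSum_apply_self (hC : 0 < C) (hp : Pairwise fun i j => 2 * C ≤ dist (p i) (p j))
    (v : ι → E) (i : ι) : tentSum C p v (p i) = v i := by
  rw [tentSum, Finset.sum_eq_single i (fun j _ hji => ?_) (by simp), tent_self, one_smul]
  rw [tent_eq_zero hC, zero_smul]
  linarith [hp hji.symm, dist_comm (p i) (p j)]

theorem dist_tentSum_le [Nonempty ι] (hC : 0 < C)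
    (hp : Pairwise fun i j => 2 * C ≤ dist (p i) (p j)) {v : ι → E} {M : ℝ}
    (hv : ∀ i, ‖v i‖ ≤ M) (y y' : Y) :
    dist (tentSum C p v y) (tentSum C p v y') ≤ M / C * dist y y' := by
  have hM : 0 ≤ M := (norm_nonneg _).trans (hv (Classical.arbitrary ι))
  calc dist (tentSum C p v y) (tentSum C p v y')
      = ‖∑ i, (tent C (p i) y - tent C (p i) y') • v i‖ := by
        simp only [dist_eq_norm, tentSum, sub_smul, Finset.sum_sub_distrib]
    _ ≤ ∑ i, |tent C (p i) y - tent C (p i) y'| * M := by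
        refine (norm_sum_le _ _).trans (Finset.sum_le_sum fun i _ => ?_)
        rw [norm_smul, Real.norm_eq_abs]
        exact mul_le_mul_of_nonneg_left (hv i) (abs_nonneg _)
    _ ≤ dist y y' / C * M := by
        rw [← Finset.sum_mul]
        exact mul_le_mul_of_nonneg_right (sum_abs_tent_sub_tent_le hC hp y y') hM
    _ = M / C * dist y y' := by ring

end SeparatedExtension

theorem norm_sub_average_le {ι E : Type*} [Fintype ι] [NormedAddCommGroup E] [NormedSpace ℝ E]
    {f : ι → E} {D : ℝ} (hD : ∀ i j, ‖f i - f j‖ ≤ D) (i : ι) :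
    ‖f i - (Fintype.card ι : ℝ)⁻¹ • ∑ j, f j‖ ≤ (1 - (Fintype.card ι : ℝ)⁻¹) * D := by
  classical
  have hpos : 0 < Fintype.card ι := Fintype.card_pos_iff.2 ⟨i⟩
  have hn : (0 : ℝ) < Fintype.card ι := by exact_mod_cast hpos
  have hsum : ∑ j, ‖f i - f j‖ ≤ (Fintype.card ι - 1) * D := by
    rw [← Finset.add_sum_erase _ _ (mem_univ i), sub_self, norm_zero, zero_add]
    calc _ ≤ (univ.erase i).card • D := Finset.sum_le_card_nsmul _ _ _ fun j _ => hD i j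
      _ = _ := by
        rw [card_erase_of_mem (mem_univ i), card_univ, nsmul_eq_mul, Nat.cast_pred hpos]
  have havg : f i - (Fintype.card ι : ℝ)⁻¹ • ∑ j, f j
      = (Fintype.card ι : ℝ)⁻¹ • ∑ j, (f i - f j) := by
    rw [Finset.sum_sub_distrib, Finset.sum_const, card_univ, smul_sub,
      ← Nat.cast_smul_eq_nsmul ℝ, smul_smul, inv_mul_cancel₀ hn.ne', one_smul]
  calc ‖f i - (Fintype.card ι : ℝ)⁻¹ • ∑ j, f j‖
      ≤ (Fintype.card ι : ℝ)⁻¹ * ∑ j, ‖f i - f j‖ := by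
        rw [havg, norm_smul, norm_inv, RCLike.norm_natCast]
        exact mul_le_mul_of_nonneg_left (norm_sum_le _ _) (by positivity)
    _ ≤ (Fintype.card ι : ℝ)⁻¹ * ((Fintype.card ι - 1) * D) := by gcongr
    _ = (1 - (Fintype.card ι : ℝ)⁻¹) * D := by field_simp

section SumZero

variable {ι : Type*} [Fintype ι]

def sumZero (ι : Type*) [Fintype ι] : Submodule ℝ (PiLp 1 fun _ : ι => ℝ) :=
  LinearMap.ker (∑ i, PiLp.projₗ 1 (fun _ : ι => ℝ) i)

theorem mem_sumZero {w : PiLp 1 fun _ : ι => ℝ} : w ∈ sumZero ι ↔ ∑ i, w i = 0 := by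
  simp [sumZero]

theorem two_mul_abs_le_norm_of_sum_eq_zero {w : PiLp 1 fun _ : ι => ℝ} (hw : ∑ i, w i = 0)
    (i : ι) : 2 * |w i| ≤ ‖w‖ := by
  classical
  have hrest : ∑ j ∈ univ.erase i, w j = -w i := by
    linarith [Finset.add_sum_erase univ (fun j => w j) (mem_univ i)]
  have : |w i| ≤ ∑ j ∈ univ.erase i, ‖w j‖ := by
    rw [← abs_neg, ← hrest]
    exact Finset.abs_sum_le_sum_abs _ _
  rw [PiLp.norm_eq_of_L1, ← Finset.add_sum_erase _ _ (mem_univ i), Real.norm_eq_abs]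
  linarith

theorem PiLp.dist_single_single_of_ne [DecidableEq ι] {i j : ι} (hij : i ≠ j) (a : ℝ) :
    dist (PiLp.single 1 i a : PiLp 1 fun _ : ι => ℝ) (PiLp.single 1 j a) = 2 * |a| := by
  rw [PiLp.dist_eq_of_L1, Finset.sum_eq_add_of_mem i j (mem_univ _) (mem_univ _) hij
    (fun k _ hk => by simp [hk.1, hk.2])]
  simp [hij, hij.symm, Real.dist_eq]
  ring

theorem exists_le_dist_single_of_sum_eq [DecidableEq ι] [Nonempty ι] {C : ℝ}
    {d : PiLp 1 fun _ : ι => ℝ} (hd : ∑ i, d i = C) :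
    ∃ i, (2 - 2 / Fintype.card ι) * C ≤ dist (PiLp.single 1 i C) d := by
  have hvertex : ∀ i, 2 * (C - d i) ≤ dist (PiLp.single 1 i C) d := fun i => by
    have hw : ∑ j, (PiLp.single 1 i C - d : PiLp 1 fun _ : ι => ℝ) j = 0 := by
      simp [PiLp.single_apply, Finset.sum_sub_distrib, hd]
    calc 2 * (C - d i) ≤ 2 * |(PiLp.single 1 i C - d : PiLp 1 fun _ : ι => ℝ) i| := by
          gcongr; simpa using le_abs_self (C - d i)
      _ ≤ dist (PiLp.single 1 i C) d := by
          rw [dist_eq_norm]; exact two_mul_abs_le_norm_of_sum_eq_zero hw i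
  have hn : (Fintype.card ι : ℝ) ≠ 0 := by positivity
  have hsum : ∑ _i : ι, (2 - 2 / Fintype.card ι) * C = ∑ i, 2 * (C - d i) := by
    rw [Finset.sum_const, card_univ, nsmul_eq_mul, ← Finset.mul_sum, Finset.sum_sub_distrib, hd,
      Finset.sum_const, card_univ, nsmul_eq_mul]
    field_simp
  obtain ⟨i, -, hi⟩ := Finset.exists_le_of_sum_le univ_nonempty hsum.le
  exact ⟨i, hi.trans (hvertex i)⟩

end SumZero

def AbsExtendable (X : Type) [MetricSpace X] (K : ℝ) : Prop :=
  ∀ (Y : Type) [MetricSpace Y] (ι : X → Y), Isometry ι →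
    ∀ (E : Type) [NormedAddCommGroup E] [NormedSpace ℝ E] [CompleteSpace E] (f : X → E),
      (∃ L, LipschitzWith L f) →
      ∃ g : Y → E, (∀ x : X, g (ι x) = f x) ∧ LipschitzWith (K.toNNReal * lipConst f) g

theorem aeConst_eq_sInf (X : Type) [MetricSpace X] :
    aeConst X = sInf {K | 0 ≤ K ∧ AbsExtendable X K} := rfl

theorem zero_le_two_sub_two_div {n : ℝ} (hn : 1 ≤ n) : 0 ≤ 2 - 2 / n := by
  rw [sub_nonneg, div_le_iff₀ (by linarith)]
  linarith

section Equilateral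

variable {X : Type} [MetricSpace X] [Fintype X] {C : ℝ}

theorem isometry_single_of_equilateral [DecidableEq X] (hC : 0 ≤ C)
    (h : ∀ x y : X, x ≠ y → dist x y = 2 * C) :
    Isometry fun x => (PiLp.single 1 x C : PiLp 1 fun _ : X => ℝ) :=
  Isometry.of_dist_eq fun x y => by
    rcases eq_or_ne x y with rfl | hxy
    · simp
    · rw [PiLp.dist_single_single_of_ne hxy, h x y hxy, abs_of_nonneg hC]

theorem absExtendable_of_equilateral [Nonempty X] (hC : 0 < C) (h : ∀ x y : X, x ≠ y → dist x y = 2 * C) :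
    AbsExtendable X (2 - 2 / (Fintype.card X : ℝ)) := by
  intro Y _ ι hι E _ _ _ f hf
  set n : ℝ := (Fintype.card X : ℝ)
  have hn : 1 ≤ n := Nat.one_le_cast.2 Fintype.card_pos
  have hK : 0 ≤ 2 - 2 / n := zero_le_two_sub_two_div hn
  set L : ℝ := (lipConst f : ℝ)
  have hLip := lipschitzWith_lipConst hf
  set b : E := n⁻¹ • ∑ x, f x
  have hfb : ∀ x, ‖f x - b‖ ≤ (2 - 2 / n) * C * L := fun x => by
    refine (norm_sub_average_le (D := 2 * C * L) (fun x y => ?_) x).trans_eq (by field_simp; ring)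
    rw [← dist_eq_norm]
    rcases eq_or_ne x y with rfl | hxy
    · rw [dist_self]; positivity
    · calc dist (f x) (f y) ≤ L * dist x y := hLip.dist_le_mul x y
        _ = 2 * C * L := by rw [h x y hxy]; ring
  have hsep : Pairwise fun x y => 2 * C ≤ dist (ι x) (ι y) := fun x y hxy =>
    (hι.dist_eq x y ▸ h x y hxy).ge
  refine ⟨fun y => b + tentSum C ι (fun x => f x - b) y,
    fun x => by simp [tentSum_apply_self hC hsep], LipschitzWith.of_dist_le_mul fun y y' => ?_⟩
  rw [dist_add_left, NNReal.coe_mul, Real.coe_toNNReal _ hK]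
  exact (dist_tentSum_le hC hsep hfb y y').trans_eq (by field_simp; ring)

theorem le_of_absExtendable_of_equilateral [Nonempty X] (hC : 0 < C)
    (h : ∀ x y : X, x ≠ y → dist x y = 2 * C) {K : ℝ} (hK : 0 ≤ K)
    (hext : AbsExtendable X K) : 2 - 2 / Fintype.card X ≤ K := by
  classical
  let ι : X → PiLp 1 (fun _ : X => ℝ) := fun x => PiLp.single 1 x C
  have hι : Isometry ι := isometry_single_of_equilateral hC.le h
  let a : PiLp 1 (fun _ : X => ℝ) := WithLp.toLp 1 fun _ => C / Fintype.card X
  have hn : (Fintype.card X : ℝ) ≠ 0 := by positivity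
  have hsum_a : ∑ x, a x = C := by simp [a]; field_simp
  let f : X → sumZero X := fun x =>
    ⟨ι x - a, mem_sumZero.2 (by simp [ι, Finset.sum_sub_distrib, PiLp.single_apply, hsum_a])⟩
  have hf : Isometry f := Isometry.of_dist_eq fun x y => by
    rw [Subtype.dist_eq, ← hι.dist_eq x y]
    simp [f, dist_eq_norm]
  obtain ⟨g, hgf, hg⟩ := hext _ ι hι _ f ⟨1, hf.lipschitz⟩
  obtain ⟨x, hx⟩ := exists_le_dist_single_of_sum_eq (C := C)
    (d := a + (g 0 : PiLp 1 fun _ : X => ℝ)) (by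
      simp only [PiLp.add_apply, Finset.sum_add_distrib, hsum_a, mem_sumZero.1 (g 0).2, add_zero])
  have hdist : dist (ι x) (a + g 0) = dist (g 0) (g (ι x)) := by
    rw [hgf, Subtype.dist_eq, dist_eq_norm, dist_eq_norm, ← norm_neg]
    simp only [f, neg_sub]
    abel_nf
  have hdist0 : dist 0 (ι x) = C := by
    rw [dist_zero_left, PiLp.norm_single, Real.norm_eq_abs, abs_of_pos hC]
  have hlip : (lipConst f : ℝ) ≤ 1 := by exact_mod_cast hf.lipschitz.lipConst_le
  have : (2 - 2 / Fintype.card X) * C ≤ K * C :=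
    calc (2 - 2 / Fintype.card X) * C ≤ dist (g 0) (g (ι x)) := hdist ▸ hx
      _ ≤ (K.toNNReal * lipConst f : NNReal) * dist 0 (ι x) := hg.dist_le_mul _ _
      _ ≤ K * C := by
        rw [NNReal.coe_mul, Real.coe_toNNReal _ hK, hdist0]
        gcongr
        exact mul_le_of_le_one_right hK hlip
  exact le_of_mul_le_mul_right this hC

end Equilateral

theorem aeConst_equilateral (X : Type) [MetricSpace X] [Fintype X] [Nonempty X]
    (C : ℝ) (hC : 0 < C) (h : ∀ x y : X, x ≠ y → dist x y = 2 * C)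
    (n : ℕ) (hn : Fintype.card X = n) :
    aeConst X = 2 - 2 / (n : ℝ) := by
  subst hn
  have hmem : 2 - 2 / (Fintype.card X : ℝ) ∈ {K | 0 ≤ K ∧ AbsExtendable X K} :=
    ⟨zero_le_two_sub_two_div (Nat.one_le_cast.2 Fintype.card_pos),
      absExtendable_of_equilateral hC h⟩
  have hlower : ∀ K ∈ {K | 0 ≤ K ∧ AbsExtendable X K}, 2 - 2 / (Fintype.card X : ℝ) ≤ K :=
    fun K hK => le_of_absExtendable_of_equilateral hC h hK.1 hK.2
  rw [aeConst_eq_sInf]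
  exact le_antisymm (csInf_le ⟨_, hlower⟩ hmem) (le_csInf ⟨_, hmem⟩ hlower)
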